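/- For every HXPath= node expression φ, abstract hybrid data model M with point m, and first-order assignment g with g(x)=m and g(x_i)=nom(i) for all nominals i, we have M,m ⊨ φ if and only if M,g ⊨ ST_x(φ), where ST_x is the standard translation of HXPath= into first-order logic. -/

import Mathlib

mutual
inductive PExp (P N M E : Type) : Type
  | mod : M → PExp P N M E
  | at_ : N → PExp P N M E
  | test : NExp P N M E → PExp P N M E
  | comp : PExp P N M E → PExp P N M E → PExp P N M E
inductive NExp (P N M E : Type) : Type
  | prop : P → NExp P N M E
  | nom : N → NExp P N M E
  | neg : NExp P N M E → NExp P N M E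
  | conj : NExp P N M E → NExp P N M E → NExp P N M E
  | cmpEq : E → PExp P N M E → PExp P N M E → NExp P N M E
  | cmpNeq : E → PExp P N M E → PExp P N M E → NExp P N M E
end

/-- An abstract hybrid data model (the requirement that each `sim e` is an
equivalence relation is stated as a separate hypothesis where needed). -/
structure Model (P N M E : Type) where
  W : Type
  sim : E → W → W → Prop
  R : M → W → W → Prop
  V : W → P → Prop
  nom : N → W

mutual
def psat {P N M E : Type} (𝔐 : Model P N M E) : PExp P N M E → 𝔐.W → 𝔐.W → Prop
  | .mod a, m, n => 𝔐.R a m n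
  | .at_ i, _, n => 𝔐.nom i = n
  | .test φ, m, n => m = n ∧ nsat 𝔐 φ m
  | .comp α β, m, n => ∃ l, psat 𝔐 α m l ∧ psat 𝔐 β l n
def nsat {P N M E : Type} (𝔐 : Model P N M E) : NExp P N M E → 𝔐.W → Prop
  | .prop p, m => 𝔐.V m p
  | .nom i, m => 𝔐.nom i = m
  | .neg φ, m => ¬ nsat 𝔐 φ m
  | .conj φ ψ, m => nsat 𝔐 φ m ∧ nsat 𝔐 ψ m
  | .cmpEq e α β, m => ∃ n l, psat 𝔐 α m n ∧ psat 𝔐 β m l ∧ 𝔐.sim e n l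
  | .cmpNeq e α β, m => ∃ n l, psat 𝔐 α m n ∧ psat 𝔐 β m l ∧ ¬ 𝔐.sim e n l
end

variable {P N M E : Type}

/-- `⊤` defined from a given node expression: `¬(φ ∧ ¬φ)`. -/
def NExp.top (φ : NExp P N M E) : NExp P N M E := .neg (.conj φ (.neg φ))
/-- `ε := [⊤]`. -/
def PExp.eps (φ : NExp P N M E) : PExp P N M E := .test (NExp.top φ)
/-- `⟨α⟩φ := ⟨α[φ] =_e α[φ]⟩`. -/
def NExp.dia (e : E) (α : PExp P N M E) (φ : NExp P N M E) : NExp P N M E :=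
  .cmpEq e (α.comp (.test φ)) (α.comp (.test φ))
/-- `[α]φ := ¬⟨α⟩¬φ`. -/
def NExp.box (e : E) (α : PExp P N M E) (φ : NExp P N M E) : NExp P N M E :=
  .neg (NExp.dia e α (.neg φ))
/-- `@_i φ := ⟨@_i⟩φ`. -/
def NExp.atf (e : E) (i : N) (φ : NExp P N M E) : NExp P N M E := NExp.dia e (.at_ i) φ
def NExp.impl (φ ψ : NExp P N M E) : NExp P N M E := .neg (.conj φ (.neg ψ))
def NExp.iffN (φ ψ : NExp P N M E) : NExp P N M E := .conj (φ.impl ψ) (ψ.impl φ)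

/-- First-order correspondence language: a unary predicate for each proposition
symbol, a binary relation for each modality and each equality symbol, over a type
`V` of variables. -/
inductive FO (P M E V : Type) : Type
  | veq : V → V → FO P M E V
  | pred : P → V → FO P M E V
  | rel : M → V → V → FO P M E V
  | data : E → V → V → FO P M E V
  | not : FO P M E V → FO P M E V
  | and : FO P M E V → FO P M E V → FO P M E V
  | ex : V → FO P M E V → FO P M E V

variable {V : Type}

def FO.Sat (W : Type) (RI : M → W → W → Prop) (PI : W → P → Prop)
    (DI : E → W → W → Prop) [DecidableEq V] : FO P M E V → (V → W) → Prop
  | .veq x y, g => g x = g y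
  | .pred p x, g => PI (g x) p
  | .rel a x y, g => RI a (g x) (g y)
  | .data e x y, g => DI e (g x) (g y)
  | .not φ, g => ¬ FO.Sat W RI PI DI φ g
  | .and φ ψ, g => FO.Sat W RI PI DI φ g ∧ FO.Sat W RI PI DI ψ g
  | .ex v φ, g => ∃ w : W, FO.Sat W RI PI DI φ (Function.update g v w)

def FO.imp (φ ψ : FO P M E V) : FO P M E V := .not (.and φ (.not ψ))
def FO.all (v : V) (φ : FO P M E V) : FO P M E V := .not (.ex v (.not φ))

/-- Variables: a variable `x_i` for each nominal `i` (left), plus countably many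
node variables (right). -/
abbrev Var (N : Type) := N ⊕ ℕ

mutual
/-- Standard translation of path expressions: `stP α x y c` is `ST'_{x,y}(α)`,
using node variables `≥ c` as fresh variables. -/
def stP {P N M E : Type} : PExp P N M E → ℕ → ℕ → ℕ → FO P M E (Var N)
  | .mod a, x, y, _ => .rel a (.inr x) (.inr y)
  | .at_ i, _, y, _ => .veq (.inr y) (.inl i)
  | .test φ, x, y, c => .and (.veq (.inr x) (.inr y)) (stN φ y c)
  | .comp α β, x, y, c => .ex (.inr c) (.and (stP α x c (c + 1)) (stP β c y (c + 1)))
/-- Standard translation of node expressions: `stN φ x c` is `ST'_x(φ)`,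
using node variables `≥ c` as fresh variables. -/
def stN {P N M E : Type} : NExp P N M E → ℕ → ℕ → FO P M E (Var N)
  | .nom i, x, _ => .veq (.inr x) (.inl i)
  | .prop p, x, _ => .pred p (.inr x)
  | .neg φ, x, c => .not (stN φ x c)
  | .conj φ ψ, x, c => .and (stN φ x c) (stN ψ x c)
  | .cmpEq e α β, x, c =>
      .ex (.inr c) (.ex (.inr (c + 1))
        (.and (stP α x c (c + 2)) (.and (stP β x (c + 1) (c + 2))
          (.data e (.inr c) (.inr (c + 1))))))
  | .cmpNeq e α β, x, c =>
      .ex (.inr c) (.ex (.inr (c + 1))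
        (.and (stP α x c (c + 2)) (.and (stP β x (c + 1) (c + 2))
          (.not (.data e (.inr c) (.inr (c + 1)))))))
end

/-- `Eq(e)` : the first-order statement that `D_e` is an equivalence relation. -/
def eqAx (e : E) : FO P M E (Var N) :=
  .and (.all (.inr 0) (.data e (.inr 0) (.inr 0)))
    (.and (.all (.inr 0) (.all (.inr 1)
            (FO.imp (.data e (.inr 0) (.inr 1)) (.data e (.inr 1) (.inr 0)))))
      (.all (.inr 0) (.all (.inr 1) (.all (.inr 2)
        (FO.imp (.and (.data e (.inr 0) (.inr 1)) (.data e (.inr 1) (.inr 2)))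
          (.data e (.inr 0) (.inr 2)))))))

mutual
/-- Equality symbols appearing in a path expression. -/
def peqs {P N M E : Type} : PExp P N M E → List E
  | .mod _ => []
  | .at_ _ => []
  | .test φ => neqs φ
  | .comp α β => peqs α ++ peqs β
/-- Equality symbols appearing in a node expression. -/
def neqs {P N M E : Type} : NExp P N M E → List E
  | .prop _ => []
  | .nom _ => []
  | .neg φ => neqs φ
  | .conj φ ψ => neqs φ ++ neqs ψ
  | .cmpEq e α β => e :: (peqs α ++ peqs β)
  | .cmpNeq e α β => e :: (peqs α ++ peqs β)
end

/-- The standard translation `ST_x(φ)`: the conjunction of `Eq(e)` for every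
equality symbol occurring in `φ`, together with `ST'_x(φ)`. -/
def stdTr (φ : NExp P N M E) (x c : ℕ) : FO P M E (Var N) :=
  (neqs φ).foldr (fun e ψ => .and (eqAx e) ψ) (stN φ x c)

/-! The translation is correct by simultaneous induction on path and node expressions,
for every assignment that interprets each `x_i` as `nom(i)`. The variables that
`ST'` quantifies are numbered from `c` on, above every variable the subformula
talks about, so updating them never disturbs the points `x`, `y` or the nominals.
The conjuncts `Eq(e)` of `ST_x(φ)` hold outright because each `∼_e` is an
equivalence relation. -/

section FirstOrder

variable {W : Type} {RI : M → W → W → Prop} {PI : W → P → Prop} {DI : E → W → W → Prop}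

theorem FO.sat_eqAx_iff [DecidableEq N] (e : E) (g : Var N → W) :
    FO.Sat W RI PI DI (eqAx e) g ↔ Equivalence (DI e) := by
  simp only [eqAx, FO.all, FO.imp, FO.Sat, Function.update_apply, not_exists, not_and,
    not_not, Sum.inr.injEq, OfNat.ofNat_ne_zero, OfNat.zero_ne_ofNat,
    OfNat.ofNat_ne_one, OfNat.one_ne_ofNat, one_ne_zero, zero_ne_one, if_true, if_false]
  exact ⟨fun ⟨hrefl, hsymm, htrans⟩ => ⟨hrefl, hsymm _ _, fun h₁ h₂ => htrans _ _ _ ⟨h₁, h₂⟩⟩,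
    fun h => ⟨h.refl, fun _ _ => h.symm, fun _ _ _ h₁₂ => h.trans h₁₂.1 h₁₂.2⟩⟩

theorem FO.sat_foldr_and_iff [DecidableEq V] {ι : Type} (f : ι → FO P M E V) (L : List ι)
    (ψ : FO P M E V) (g : V → W) :
    FO.Sat W RI PI DI (L.foldr (fun i χ => .and (f i) χ) ψ) g ↔
      (∀ i ∈ L, FO.Sat W RI PI DI (f i) g) ∧ FO.Sat W RI PI DI ψ g := by
  induction L with
  | nil => simp
  | cons i L ih => simp only [List.foldr, FO.Sat, ih, List.forall_mem_cons, and_assoc]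

end FirstOrder

section Translation

variable [DecidableEq N] (𝔐 : Model P N M E)

mutual

theorem sat_stP_iff (α : PExp P N M E) (x y c : ℕ) (hx : x < c) (hy : y < c)
    (g : Var N → 𝔐.W) (hg : ∀ i : N, g (.inl i) = 𝔐.nom i) :
    FO.Sat 𝔐.W 𝔐.R 𝔐.V 𝔐.sim (stP α x y c) g ↔ psat 𝔐 α (g (.inr x)) (g (.inr y)) := by
  cases α with
  | mod a => rfl
  | at_ i => simp only [stP, FO.Sat, psat, hg, eq_comm]
  | test φ =>
    simp only [stP, FO.Sat, psat, sat_stN_iff φ y c hy g hg]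
    exact and_congr_right fun hxy => by rw [hxy]
  | comp α β =>
    simp only [stP, FO.Sat, psat]
    refine exists_congr fun l => ?_
    have hg' : ∀ i : N, Function.update g (.inr c) l (.inl i) = 𝔐.nom i := fun i => by
      simp [hg]
    rw [sat_stP_iff α x c (c + 1) (by omega) (by omega) _ hg',
      sat_stP_iff β c y (c + 1) (by omega) (by omega) _ hg']
    simp [hx.ne, hy.ne]

theorem sat_stN_iff (φ : NExp P N M E) (x c : ℕ) (hx : x < c)
    (g : Var N → 𝔐.W) (hg : ∀ i : N, g (.inl i) = 𝔐.nom i) :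
    FO.Sat 𝔐.W 𝔐.R 𝔐.V 𝔐.sim (stN φ x c) g ↔ nsat 𝔐 φ (g (.inr x)) := by
  cases φ with
  | prop p => rfl
  | nom i => simp only [stN, FO.Sat, nsat, hg, eq_comm]
  | neg φ => exact not_congr (sat_stN_iff φ x c hx g hg)
  | conj φ ψ => exact and_congr (sat_stN_iff φ x c hx g hg) (sat_stN_iff ψ x c hx g hg)
  | cmpEq e α β | cmpNeq e α β =>
    simp only [stN, FO.Sat, nsat]
    refine exists_congr fun n => exists_congr fun l => ?_
    have hg' : ∀ i : N,
        Function.update (Function.update g (.inr c) n) (.inr (c + 1)) l (.inl i) = 𝔐.nom i :=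
      fun i => by simp [hg]
    rw [sat_stP_iff α x c (c + 2) (by omega) (by omega) _ hg',
      sat_stP_iff β x (c + 1) (c + 2) (by omega) (by omega) _ hg']
    simp [hx.ne, (show x ≠ c + 1 by omega)]

end

end Translation

/-- The standard translation is truth preserving: for an abstract hybrid data
model `𝔐` (so each `∼_e` is an equivalence relation), a point `m` and an
assignment `g` with `g(x) = m` and `g(x_i) = nom(i)` for every nominal `i`,
`𝔐,m ⊨ φ` iff `𝔐,g ⊨ ST_x(φ)`. -/
theorem standard_translation_correct [DecidableEq N]
    (𝔐 : Model P N M E) (hsim : ∀ e, Equivalence (𝔐.sim e))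
    (φ : NExp P N M E) (m : 𝔐.W) (x c : ℕ) (hxc : x < c)
    (g : Var N → 𝔐.W) (hgx : g (.inr x) = m) (hgi : ∀ i : N, g (.inl i) = 𝔐.nom i) :
    nsat 𝔐 φ m ↔ FO.Sat 𝔐.W 𝔐.R 𝔐.V 𝔐.sim (stdTr φ x c) g := by
  have hEq : ∀ e ∈ neqs φ, FO.Sat 𝔐.W 𝔐.R 𝔐.V 𝔐.sim (eqAx e) g := fun e _ =>
    (FO.sat_eqAx_iff e g).2 (hsim e)
  rw [stdTr, FO.sat_foldr_and_iff, sat_stN_iff 𝔐 φ x c hxc g hgi, hgx]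
  exact ⟨fun h => ⟨hEq, h⟩, And.right⟩
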